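/- arXiv:2604.27546 — 9 statements merged into one kernel-verified Lean document; each statement's English description precedes it below -/
import Mathlib

section
/- Let (A,·) be a Zinbiel algebra and (B,∘) a Leibniz algebra. The bracket on A⊗B defined by [a₁⊗b₁, a₂⊗b₂] = (a₁·a₂)⊗(b₁∘b₂) − (a₂·a₁)⊗(b₂∘b₁) makes A⊗B a Lie algebra. -/
open TensorProduct

/-- The tensor product of a Zinbiel algebra and a Leibniz algebra is a Lie algebra
under the bracket `[a₁⊗b₁, a₂⊗b₂] = (a₁·a₂)⊗(b₁∘b₂) − (a₂·a₁)⊗(b₂∘b₁)`. -/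
theorem zinbiel_tensor_leibniz_lie (K A B : Type*) [Field K] [CharZero K]
    [AddCommGroup A] [Module K A] [AddCommGroup B] [Module K B]
    (mulA : A →ₗ[K] A →ₗ[K] A)
    (hz : ∀ a₁ a₂ a₃ : A,
      mulA a₁ (mulA a₂ a₃) = mulA (mulA a₁ a₂) a₃ + mulA (mulA a₂ a₁) a₃)
    (mulB : B →ₗ[K] B →ₗ[K] B)
    (hleib : ∀ b₁ b₂ b₃ : B,
      mulB b₁ (mulB b₂ b₃) = mulB (mulB b₁ b₂) b₃ + mulB b₂ (mulB b₁ b₃))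
    (br : A ⊗[K] B →ₗ[K] A ⊗[K] B →ₗ[K] A ⊗[K] B)
    (hbr : ∀ (a₁ a₂ : A) (b₁ b₂ : B),
      br (a₁ ⊗ₜ[K] b₁) (a₂ ⊗ₜ[K] b₂)
        = (mulA a₁ a₂) ⊗ₜ[K] (mulB b₁ b₂) - (mulA a₂ a₁) ⊗ₜ[K] (mulB b₂ b₁)) :
    (∀ g : A ⊗[K] B, br g g = 0) ∧
    (∀ g₁ g₂ g₃ : A ⊗[K] B,
      br (br g₁ g₂) g₃ + br (br g₂ g₃) g₁ + br (br g₃ g₁) g₂ = 0) := by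
  have hleib' : ∀ x y z : B,
      mulB (mulB x y) z = mulB x (mulB y z) - mulB y (mulB x z) := by
    intro x y z
    rw [eq_sub_iff_add_eq, ← hleib]
  -- antisymmetry
  have key : ∀ x y : A ⊗[K] B, br x y + br y x = 0 := by
    intro x y
    induction x using TensorProduct.induction_on with
    | zero => simp
    | tmul a b =>
      induction y using TensorProduct.induction_on with
      | zero => simp
      | tmul c d => rw [hbr, hbr]; abel
      | add u v hu hv =>
        simp only [map_add, LinearMap.add_apply]
        have h := congrArg₂ (· + ·) hu hv
        simp only [add_zero] at h
        rw [← h]; abel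
    | add u v hu hv =>
      simp only [map_add, LinearMap.add_apply]
      have h := congrArg₂ (· + ·) hu hv
      simp only [add_zero] at h
      rw [← h]; abel
  constructor
  · intro g
    have h := key g g
    rw [← two_smul K] at h
    have h2 : (2 : K) ≠ 0 := two_ne_zero
    exact (smul_eq_zero.mp h).resolve_left h2
  · intro g₁ g₂ g₃
    induction g₁ using TensorProduct.induction_on with
    | zero => simp
    | add u v hu hv =>
      simp only [map_add, LinearMap.add_apply]
      have h := congrArg₂ (· + ·) hu hv
      simp only [add_zero] at h
      rw [← h]; abel
    | tmul a₁ b₁ =>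
      induction g₂ using TensorProduct.induction_on with
      | zero => simp
      | add u v hu hv =>
        simp only [map_add, LinearMap.add_apply]
        have h := congrArg₂ (· + ·) hu hv
        simp only [add_zero] at h
        rw [← h]; abel
      | tmul a₂ b₂ =>
        induction g₃ using TensorProduct.induction_on with
        | zero => simp
        | add u v hu hv =>
          simp only [map_add, LinearMap.add_apply]
          have h := congrArg₂ (· + ·) hu hv
          simp only [add_zero] at h
          rw [← h]; abel
        | tmul a₃ b₃ =>
          simp only [hbr, map_sub, LinearMap.sub_apply, hbr, hz, hleib',
            TensorProduct.tmul_sub, TensorProduct.sub_tmul,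
            TensorProduct.tmul_add, TensorProduct.add_tmul]
          abel
end

section
/- In a quadratic Zinbiel algebra (A,·,κ), the identity κ(a₁·a₂, a₃) = −κ(a₁, a₃·a₂) holds for all a₁,a₂,a₃ ∈ A. -/
/-- In a quadratic Zinbiel algebra, `κ(a₁·a₂, a₃) = −κ(a₁, a₃·a₂)`. -/
theorem quadratic_zinbiel_identity (K A : Type*) [Field K] [CharZero K]
    [AddCommGroup A] [Module K A]
    (mul : A →ₗ[K] A →ₗ[K] A)
    (hz : ∀ a₁ a₂ a₃ : A,
      mul a₁ (mul a₂ a₃) = mul (mul a₁ a₂) a₃ + mul (mul a₂ a₁) a₃)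
    (κ : A →ₗ[K] A →ₗ[K] K)
    (hskew : ∀ a b : A, κ a b = -κ b a)
    (hnd : ∀ a : A, (∀ b : A, κ a b = 0) → a = 0)
    (hinv : ∀ a₁ a₂ a₃ : A, κ (mul a₁ a₂) a₃ = κ a₂ (mul a₁ a₃ + mul a₃ a₁)) :
    ∀ a₁ a₂ a₃ : A, κ (mul a₁ a₂) a₃ = -κ a₁ (mul a₃ a₂) := by
  have key : ∀ x y z : A,
      κ (mul x y) z + κ (mul x z) y + κ (mul z x) y = 0 := by
    intro x y z
    have h := hinv x y z
    rw [map_add, hskew y (mul x z), hskew y (mul z x)] at h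
    linear_combination h
  intro a₁ a₂ a₃
  have h1 := key a₁ a₂ a₃
  have h2 := key a₃ a₂ a₁
  have h3 := hskew a₁ (mul a₃ a₂)
  linear_combination h1 - h2 + h3
end

section
/- Let (A,·,κ) be a finite-dimensional quadratic Zinbiel algebra. Define Δ: A → A⊗A by κ̃(Δ(a₁), a₂⊗a₃) = −κ(a₁, a₂·a₃), where κ̃ is the induced form on A⊗A (κ̃(x₁⊗x₂, y₁⊗y₂) = κ(x₁,y₁)κ(x₂,y₂)). Then (A,Δ) is a Zinbiel coalgebra. -/
/-!
Pair both sides with `a ⊗ (b ⊗ c)` through the form on `A ⊗ (A ⊗ A)` induced by `κ`, which is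
nondegenerate since `κ` is and `A` is finite-dimensional. As `Δ` is the `κ`-transpose of `-mul`, the
three terms pair with `d` to `κ d (a(bc))`, `κ d ((ab)c)` and `κ d ((ba)c)`, so the Zinbiel
coalgebra identity is the transpose of the Zinbiel identity.
-/

open TensorProduct LinearMap

section Zinbiel

variable {K A : Type*} [Field K] [AddCommGroup A] [Module K A]

def IsZinbielProduct (mul : A →ₗ[K] A →ₗ[K] A) : Prop :=
  ∀ a b c : A, mul a (mul b c) = mul (mul a b) c + mul (mul b a) c

def IsZinbielCoproduct (Δ : A →ₗ[K] A ⊗[K] A) : Prop :=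
  lTensor A Δ ∘ₗ Δ =
    (TensorProduct.assoc K A A A).toLinearMap ∘ₗ
      (rTensor A Δ ∘ₗ Δ + rTensor A (TensorProduct.comm K A A).toLinearMap ∘ₗ rTensor A Δ ∘ₗ Δ)

theorem IsZinbielProduct.neg {mul : A →ₗ[K] A →ₗ[K] A} (h : IsZinbielProduct mul) :
    IsZinbielProduct (-mul) := by
  intro a b c
  simpa only [LinearMap.neg_apply, map_neg, neg_neg] using h a b c

theorem pairing_comm_apply {κ : A →ₗ[K] A →ₗ[K] K} {κt : A ⊗[K] A →ₗ[K] A ⊗[K] A →ₗ[K] K}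
    (hκt : ∀ x₁ x₂ y₁ y₂ : A, κt (x₁ ⊗ₜ[K] x₂) (y₁ ⊗ₜ[K] y₂) = κ x₁ y₁ * κ x₂ y₂)
    (w : A ⊗[K] A) (b c : A) :
    κt (TensorProduct.comm K A A w) (b ⊗ₜ[K] c) = κt w (c ⊗ₜ[K] b) := by
  induction w using TensorProduct.induction_on with
  | zero => simp
  | tmul u v => rw [comm_tmul, hκt, hκt, mul_comm]
  | add u v hu hv => simp only [map_add, LinearMap.add_apply, hu, hv]

variable [FiniteDimensional K A] {κ : A →ₗ[K] A →ₗ[K] K}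

noncomputable def dualEquivOfSeparatingLeft (hκ : ∀ a, (∀ b, κ a b = 0) → a = 0) :
    A ≃ₗ[K] Module.Dual K A :=
  κ.linearEquivOfInjective
    ((injective_iff_map_eq_zero κ).2 fun a ha => hκ a fun b => by rw [ha, LinearMap.zero_apply])
    Subspace.dual_finrank_eq.symm

noncomputable def tripleDualEquiv (hκ : ∀ a, (∀ b, κ a b = 0) → a = 0) :
    A ⊗[K] (A ⊗[K] A) ≃ₗ[K] (A →ₗ[K] A →ₗ[K] A →ₗ[K] K) :=
  let e := dualEquivOfSeparatingLeft hκ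
  TensorProduct.congr e (TensorProduct.congr e e) ≪≫ₗ
    TensorProduct.congr (LinearEquiv.refl K _) (dualTensorHomEquiv K A (Module.Dual K A)) ≪≫ₗ
    dualTensorHomEquiv K A (A →ₗ[K] Module.Dual K A)

theorem tripleDualEquiv_tmul (hκ : ∀ a, (∀ b, κ a b = 0) → a = 0) (x y z a b c : A) :
    tripleDualEquiv hκ (x ⊗ₜ[K] (y ⊗ₜ[K] z)) a b c = κ x a * (κ y b * κ z c) := by
  simp [tripleDualEquiv, dualEquivOfSeparatingLeft, dualTensorHomEquiv,
    linearEquivOfInjective_apply, smul_eq_mul]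

variable {κt : A ⊗[K] A →ₗ[K] A ⊗[K] A →ₗ[K] K}

theorem tripleDualEquiv_tmul_left (hκ : ∀ a, (∀ b, κ a b = 0) → a = 0)
    (hκt : ∀ x₁ x₂ y₁ y₂ : A, κt (x₁ ⊗ₜ[K] x₂) (y₁ ⊗ₜ[K] y₂) = κ x₁ y₁ * κ x₂ y₂)
    (x : A) (w : A ⊗[K] A) (a b c : A) :
    tripleDualEquiv hκ (x ⊗ₜ[K] w) a b c = κ x a * κt w (b ⊗ₜ[K] c) := by
  induction w using TensorProduct.induction_on with
  | zero => simp
  | tmul y z => rw [tripleDualEquiv_tmul, hκt]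
  | add u v hu hv => simp only [tmul_add, map_add, LinearMap.add_apply, hu, hv, mul_add]

theorem tripleDualEquiv_assoc_tmul (hκ : ∀ a, (∀ b, κ a b = 0) → a = 0)
    (hκt : ∀ x₁ x₂ y₁ y₂ : A, κt (x₁ ⊗ₜ[K] x₂) (y₁ ⊗ₜ[K] y₂) = κ x₁ y₁ * κ x₂ y₂)
    (w : A ⊗[K] A) (y a b c : A) :
    tripleDualEquiv hκ (TensorProduct.assoc K A A A (w ⊗ₜ[K] y)) a b c =
      κt w (a ⊗ₜ[K] b) * κ y c := by
  induction w using TensorProduct.induction_on with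
  | zero => simp
  | tmul u v => rw [assoc_tmul, tripleDualEquiv_tmul, hκt, mul_assoc]
  | add u v hu hv => simp only [add_tmul, map_add, LinearMap.add_apply, hu, hv, add_mul]

variable {Δ : A →ₗ[K] A ⊗[K] A} {mul : A →ₗ[K] A →ₗ[K] A}

theorem tripleDualEquiv_lTensor (hκ : ∀ a, (∀ b, κ a b = 0) → a = 0)
    (hκt : ∀ x₁ x₂ y₁ y₂ : A, κt (x₁ ⊗ₜ[K] x₂) (y₁ ⊗ₜ[K] y₂) = κ x₁ y₁ * κ x₂ y₂)
    (hΔ : ∀ x b c : A, κt (Δ x) (b ⊗ₜ[K] c) = κ x (mul b c)) (t : A ⊗[K] A) (a b c : A) :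
    tripleDualEquiv hκ (lTensor A Δ t) a b c = κt t (a ⊗ₜ[K] mul b c) := by
  induction t using TensorProduct.induction_on with
  | zero => simp
  | tmul x y => rw [lTensor_tmul, tripleDualEquiv_tmul_left hκ hκt, hΔ, hκt]
  | add u v hu hv => simp only [map_add, LinearMap.add_apply, hu, hv]

theorem tripleDualEquiv_assoc_rTensor (hκ : ∀ a, (∀ b, κ a b = 0) → a = 0)
    (hκt : ∀ x₁ x₂ y₁ y₂ : A, κt (x₁ ⊗ₜ[K] x₂) (y₁ ⊗ₜ[K] y₂) = κ x₁ y₁ * κ x₂ y₂)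
    (hΔ : ∀ x b c : A, κt (Δ x) (b ⊗ₜ[K] c) = κ x (mul b c)) (t : A ⊗[K] A) (a b c : A) :
    tripleDualEquiv hκ (TensorProduct.assoc K A A A (rTensor A Δ t)) a b c =
      κt t (mul a b ⊗ₜ[K] c) := by
  induction t using TensorProduct.induction_on with
  | zero => simp
  | tmul x y => rw [rTensor_tmul, tripleDualEquiv_assoc_tmul hκ hκt, hΔ, hκt]
  | add u v hu hv => simp only [map_add, LinearMap.add_apply, hu, hv]

theorem isZinbielCoproduct_of_pairing (hκ : ∀ a, (∀ b, κ a b = 0) → a = 0)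
    (hκt : ∀ x₁ x₂ y₁ y₂ : A, κt (x₁ ⊗ₜ[K] x₂) (y₁ ⊗ₜ[K] y₂) = κ x₁ y₁ * κ x₂ y₂)
    (hΔ : ∀ x b c : A, κt (Δ x) (b ⊗ₜ[K] c) = κ x (mul b c)) (hmul : IsZinbielProduct mul) :
    IsZinbielCoproduct Δ := by
  have hΔcomm : ∀ x b c : A,
      κt ((TensorProduct.comm K A A).toLinearMap (Δ x)) (b ⊗ₜ[K] c) = κ x (mul.flip b c) := by
    intro x b c
    rw [LinearEquiv.coe_coe, pairing_comm_apply hκt, hΔ, flip_apply]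
  refine LinearMap.ext fun d => (tripleDualEquiv hκ).injective ?_
  ext a b c
  simp only [comp_apply, LinearMap.add_apply, map_add, LinearEquiv.coe_coe, ← rTensor_comp_apply]
  rw [tripleDualEquiv_lTensor hκ hκt hΔ, tripleDualEquiv_assoc_rTensor hκ hκt hΔ,
    tripleDualEquiv_assoc_rTensor hκ hκt hΔcomm, hΔ, hΔ, hΔ, flip_apply, hmul a b c, map_add]

end Zinbiel

theorem quadratic_zinbiel_dual_coalgebra_general (K A : Type*) [Field K]
    [AddCommGroup A] [Module K A] [FiniteDimensional K A]
    (mul : A →ₗ[K] A →ₗ[K] A)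
    (hz : ∀ a₁ a₂ a₃ : A,
      mul a₁ (mul a₂ a₃) = mul (mul a₁ a₂) a₃ + mul (mul a₂ a₁) a₃)
    (κ : A →ₗ[K] A →ₗ[K] K)
    (hnd : ∀ a : A, (∀ b : A, κ a b = 0) → a = 0)
    (κt : A ⊗[K] A →ₗ[K] A ⊗[K] A →ₗ[K] K)
    (hκt : ∀ x₁ x₂ y₁ y₂ : A,
      κt (x₁ ⊗ₜ[K] x₂) (y₁ ⊗ₜ[K] y₂) = κ x₁ y₁ * κ x₂ y₂)
    (Δ : A →ₗ[K] A ⊗[K] A)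
    (hΔ : ∀ a₁ a₂ a₃ : A, κt (Δ a₁) (a₂ ⊗ₜ[K] a₃) = -κ a₁ (mul a₂ a₃)) :
    (lTensor A Δ) ∘ₗ Δ =
      (TensorProduct.assoc K A A A).toLinearMap ∘ₗ
        ((rTensor A Δ) ∘ₗ Δ +
          (rTensor A (TensorProduct.comm K A A).toLinearMap) ∘ₗ (rTensor A Δ) ∘ₗ Δ) := by
  have hΔneg : ∀ x b c : A, κt (Δ x) (b ⊗ₜ[K] c) = κ x ((-mul) b c) := by
    intro x b c
    rw [hΔ, LinearMap.neg_apply, LinearMap.neg_apply, map_neg]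
  exact isZinbielCoproduct_of_pairing hnd hκt hΔneg (IsZinbielProduct.neg hz)

/-- The coproduct dual to the product of a quadratic Zinbiel algebra via κ
defines a Zinbiel coalgebra. -/
theorem quadratic_zinbiel_dual_coalgebra (K A : Type*) [Field K] [CharZero K]
    [AddCommGroup A] [Module K A] [FiniteDimensional K A]
    (mul : A →ₗ[K] A →ₗ[K] A)
    (hz : ∀ a₁ a₂ a₃ : A,
      mul a₁ (mul a₂ a₃) = mul (mul a₁ a₂) a₃ + mul (mul a₂ a₁) a₃)
    (κ : A →ₗ[K] A →ₗ[K] K)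
    (hskew : ∀ a b : A, κ a b = -κ b a)
    (hnd : ∀ a : A, (∀ b : A, κ a b = 0) → a = 0)
    (hinv : ∀ a₁ a₂ a₃ : A, κ (mul a₁ a₂) a₃ = κ a₂ (mul a₁ a₃ + mul a₃ a₁))
    (κt : A ⊗[K] A →ₗ[K] A ⊗[K] A →ₗ[K] K)
    (hκt : ∀ x₁ x₂ y₁ y₂ : A,
      κt (x₁ ⊗ₜ[K] x₂) (y₁ ⊗ₜ[K] y₂) = κ x₁ y₁ * κ x₂ y₂)
    (Δ : A →ₗ[K] A ⊗[K] A)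
    (hΔ : ∀ a₁ a₂ a₃ : A, κt (Δ a₁) (a₂ ⊗ₜ[K] a₃) = -κ a₁ (mul a₂ a₃)) :
    (lTensor A Δ) ∘ₗ Δ =
      (TensorProduct.assoc K A A A).toLinearMap ∘ₗ
        ((rTensor A Δ) ∘ₗ Δ +
          (rTensor A (TensorProduct.comm K A A).toLinearMap) ∘ₗ (rTensor A Δ) ∘ₗ Δ) :=
  quadratic_zinbiel_dual_coalgebra_general K A mul hz κ hnd κt hκt Δ hΔ
end

section
/- Let (A,·) be a Zinbiel algebra. Then (A*, ℓ·* + r·*, −r·*) is a representation of (A,·), where ℓ·(a)b = a·b, r·(a)b = b·a, and * denotes the dual map on A*. -/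
/-- The coregular representation `(A*, ℓ·* + r·*, −r·*)` of a Zinbiel algebra
is a representation. -/
theorem zinbiel_coregular_rep (K A : Type*) [Field K] [CharZero K]
    [AddCommGroup A] [Module K A]
    (mul : A →ₗ[K] A →ₗ[K] A)
    (hz : ∀ a₁ a₂ a₃ : A,
      mul a₁ (mul a₂ a₃) = mul (mul a₁ a₂) a₃ + mul (mul a₂ a₁) a₃) :
    let L : A → Module.Dual K A →ₗ[K] Module.Dual K A :=
      fun a => (mul a).dualMap + (mul.flip a).dualMap
    let R : A → Module.Dual K A →ₗ[K] Module.Dual K A :=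
      fun a => -(mul.flip a).dualMap
    (∀ a₁ a₂ : A, (L a₂) ∘ₗ (L a₁) = L (mul a₂ a₁) + L (mul a₁ a₂)) ∧
    (∀ a₁ a₂ : A, R (mul a₁ a₂) = (R a₂) ∘ₗ (R a₁) + (R a₂) ∘ₗ (L a₁)) ∧
    (∀ a₁ a₂ : A, R (mul a₁ a₂) = (L a₁) ∘ₗ (R a₂)) := by
  intro L R
  refine ⟨?_, ?_, ?_⟩ <;> intro a₁ a₂ <;> ext f x <;>
    simp only [L, R, LinearMap.comp_apply, LinearMap.add_apply, LinearMap.neg_apply,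
      LinearMap.dualMap_apply, LinearMap.flip_apply, ← map_add, ← map_neg] <;>
    congr 1
  · rw [hz a₁ a₂ x, hz a₁ x a₂, hz x a₂ a₁, hz x a₁ a₂]; abel
  · simp only [map_neg, neg_neg]; rw [hz x a₁ a₂, hz a₁ x a₂]; abel
  · simp only [map_neg, neg_neg]; rw [hz x a₁ a₂]; abel
end

section
/- Let (B,∘) be a Leibniz algebra, (A,·,κ) a finite-dimensional quadratic Zinbiel algebra, and [−,−] the induced Lie bracket on A⊗B. If ω is a nondegenerate invariant skew-symmetric bilinear form on (B,∘), then B(a₁⊗b₁, a₂⊗b₂) := κ(a₁,a₂)ω(b₁,b₂) defines a nondegenerate invariant symmetric bilinear form on the Lie algebra (A⊗B, [−,−]). -/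
open TensorProduct

/-- The product of the forms of a quadratic Zinbiel algebra and a Leibniz algebra with a
nondegenerate invariant skew-symmetric form is a nondegenerate invariant symmetric
bilinear form on the induced Lie algebra on the tensor product. -/
theorem tensor_form_invariant (K A B : Type*) [Field K] [CharZero K]
    [AddCommGroup A] [Module K A] [FiniteDimensional K A]
    [AddCommGroup B] [Module K B]
    (mulA : A →ₗ[K] A →ₗ[K] A)
    (hz : ∀ a₁ a₂ a₃ : A,
      mulA a₁ (mulA a₂ a₃) = mulA (mulA a₁ a₂) a₃ + mulA (mulA a₂ a₁) a₃)
    (κ : A →ₗ[K] A →ₗ[K] K)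
    (hκskew : ∀ a b : A, κ a b = -κ b a)
    (hκnd : ∀ a : A, (∀ b : A, κ a b = 0) → a = 0)
    (hκinv : ∀ a₁ a₂ a₃ : A, κ (mulA a₁ a₂) a₃ = κ a₂ (mulA a₁ a₃ + mulA a₃ a₁))
    (mulB : B →ₗ[K] B →ₗ[K] B)
    (hleib : ∀ b₁ b₂ b₃ : B,
      mulB b₁ (mulB b₂ b₃) = mulB (mulB b₁ b₂) b₃ + mulB b₂ (mulB b₁ b₃))
    (ω : B →ₗ[K] B →ₗ[K] K)
    (hωskew : ∀ b₁ b₂ : B, ω b₁ b₂ = -ω b₂ b₁)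
    (hωnd : ∀ b : B, (∀ c : B, ω b c = 0) → b = 0)
    (hωinv : ∀ b₁ b₂ b₃ : B, ω (mulB b₁ b₂) b₃ = ω b₁ (mulB b₂ b₃ + mulB b₃ b₂))
    (br : A ⊗[K] B →ₗ[K] A ⊗[K] B →ₗ[K] A ⊗[K] B)
    (hbr : ∀ (a₁ a₂ : A) (b₁ b₂ : B),
      br (a₁ ⊗ₜ[K] b₁) (a₂ ⊗ₜ[K] b₂)
        = (mulA a₁ a₂) ⊗ₜ[K] (mulB b₁ b₂) - (mulA a₂ a₁) ⊗ₜ[K] (mulB b₂ b₁))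
    (Bf : A ⊗[K] B →ₗ[K] A ⊗[K] B →ₗ[K] K)
    (hBf : ∀ (a₁ a₂ : A) (b₁ b₂ : B),
      Bf (a₁ ⊗ₜ[K] b₁) (a₂ ⊗ₜ[K] b₂) = κ a₁ a₂ * ω b₁ b₂) :
    (∀ g₁ g₂ : A ⊗[K] B, Bf g₁ g₂ = Bf g₂ g₁) ∧
    (∀ g₁ g₂ g₃ : A ⊗[K] B, Bf (br g₁ g₂) g₃ = Bf g₁ (br g₂ g₃)) ∧
    (∀ g : A ⊗[K] B, (∀ h : A ⊗[K] B, Bf g h = 0) → g = 0) := by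
  refine ⟨?_, ?_, ?_⟩
  · -- symmetry
    intro g₁ g₂
    induction g₁ using TensorProduct.induction_on with
    | zero => simp
    | tmul a b =>
      induction g₂ using TensorProduct.induction_on with
      | zero => simp
      | tmul a' b' => rw [hBf, hBf, hκskew, hωskew]; ring
      | add x y hx hy => simp only [map_add, LinearMap.add_apply, hx, hy]
    | add x y hx hy => simp only [map_add, LinearMap.add_apply, hx, hy]
  · -- invariance
    intro g₁ g₂ g₃
    induction g₁ using TensorProduct.induction_on with
    | zero => simp
    | tmul a₁ b₁ =>
      induction g₂ using TensorProduct.induction_on with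
      | zero => simp
      | tmul a₂ b₂ =>
        induction g₃ using TensorProduct.induction_on with
        | zero => simp
        | tmul a₃ b₃ =>
          rw [hbr, hbr, map_sub, map_sub, LinearMap.sub_apply, hBf, hBf, hBf, hBf]
          have i23 : κ (mulA a₂ a₃) a₁ = κ a₃ (mulA a₂ a₁) + κ a₃ (mulA a₁ a₂) := by
            rw [hκinv, map_add]
          have i12 : κ (mulA a₁ a₂) a₃ = κ a₂ (mulA a₁ a₃) + κ a₂ (mulA a₃ a₁) := by
            rw [hκinv, map_add]
          have i13 : κ (mulA a₁ a₃) a₂ = κ a₃ (mulA a₁ a₂) + κ a₃ (mulA a₂ a₁) := by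
            rw [hκinv, map_add]
          have i31 : κ (mulA a₃ a₁) a₂ = κ a₁ (mulA a₃ a₂) + κ a₁ (mulA a₂ a₃) := by
            rw [hκinv, map_add]
          have hA1 : κ a₁ (mulA a₂ a₃) = κ (mulA a₁ a₂) a₃ + κ (mulA a₂ a₁) a₃ := by
            linear_combination -i23 + hκskew a₁ (mulA a₂ a₃) - hκskew a₃ (mulA a₂ a₁)
              - hκskew a₃ (mulA a₁ a₂)
          have hA2 : κ a₁ (mulA a₃ a₂) = -κ (mulA a₁ a₂) a₃ := by
            linear_combination i12 + hκskew a₂ (mulA a₁ a₃) + hκskew a₂ (mulA a₃ a₁)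
              - i13 - i31 - hκskew a₃ (mulA a₂ a₁) - hκskew a₃ (mulA a₁ a₂) - hA1
          have j12 : ω (mulB b₁ b₂) b₃ = ω b₁ (mulB b₂ b₃) + ω b₁ (mulB b₃ b₂) := by
            rw [hωinv, map_add]
          have j31 : ω (mulB b₃ b₁) b₂ = ω b₃ (mulB b₁ b₂) + ω b₃ (mulB b₂ b₁) := by
            rw [hωinv, map_add]
          have j13 : ω (mulB b₁ b₃) b₂ = ω b₁ (mulB b₃ b₂) + ω b₁ (mulB b₂ b₃) := by
            rw [hωinv, map_add]
          have j23 : ω (mulB b₂ b₃) b₁ = ω b₂ (mulB b₃ b₁) + ω b₂ (mulB b₁ b₃) := by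
            rw [hωinv, map_add]
          have hB1 : ω b₁ (mulB b₂ b₃) = -ω (mulB b₂ b₁) b₃ := by
            linear_combination -j23 - hωskew b₂ (mulB b₃ b₁) - hωskew b₂ (mulB b₁ b₃)
              + j31 + hωskew b₃ (mulB b₁ b₂) + hωskew b₃ (mulB b₂ b₁) + j13 - j12
              + hωskew b₁ (mulB b₂ b₃)
          have hB2 : ω b₁ (mulB b₃ b₂) = ω (mulB b₁ b₂) b₃ + ω (mulB b₂ b₁) b₃ := by
            linear_combination -j12 - hB1
          rw [hA1, hA2, hB1, hB2]
          ring
        | add x y hx hy =>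
          simp only [map_add, LinearMap.add_apply, hx, hy]
      | add x y hx hy =>
        simp only [map_add, LinearMap.add_apply, hx, hy]
    | add x y hx hy =>
      simp only [map_add, LinearMap.add_apply, hx, hy]
  · -- nondegeneracy
    intro g hg
    -- κ is injective as a map A → Dual A
    have hκinj : Function.Injective (κ : A →ₗ[K] Module.Dual K A) := by
      intro a a' h
      have h0 : ∀ b, κ (a - a') b = 0 := by
        intro b
        rw [map_sub, LinearMap.sub_apply, h]
        ring
      exact sub_eq_zero.mp (hκnd _ h0)
    have hD : Function.Injective (dualTensorHom K A B) := by
      rw [← dualTensorHomEquivOfBasis_toLinearMap (Module.Free.chooseBasis K A)]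
      exact (dualTensorHomEquivOfBasis (N := B) (Module.Free.chooseBasis K A)).injective
    have hR : Function.Injective
        (LinearMap.rTensor B (κ : A →ₗ[K] Module.Dual K A)) :=
      Module.Flat.rTensor_preserves_injective_linearMap _ hκinj
    have key : ∀ (g : A ⊗[K] B) (a : A) (c : B),
        ω ((dualTensorHom K A B) ((LinearMap.rTensor B κ) g) a) c = Bf g (a ⊗ₜ[K] c) := by
      intro g a c
      induction g using TensorProduct.induction_on with
      | zero => simp
      | tmul x y =>
        rw [LinearMap.rTensor_tmul, dualTensorHom_apply, hBf, map_smul]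
        simp [smul_eq_mul]
      | add x y hx hy =>
        simp only [map_add, LinearMap.add_apply, hx, hy]
    have hz0 : (dualTensorHom K A B) ((LinearMap.rTensor B κ) g) = 0 := by
      ext a
      refine hωnd _ ?_
      intro c
      rw [key g a c, hg]
    have : (LinearMap.rTensor B (κ : A →ₗ[K] Module.Dual K A)) g = 0 := by
      apply hD
      rw [hz0, map_zero]
    exact hR (by rw [this, map_zero])
end

section
/- Let (B,∘) be a finite-dimensional Leibniz algebra and r ∈ B⊗B symmetric. Then r is a solution of the Leibniz Yang–Baxter equation r₁₂∘r₁₃ − r₁₂∘r₂₃ − r₂₃∘r₁₂ + r₂₃∘r₁₃ = 0 if and only if r♯: B* → B is an O-operator of (B,∘) associated to the coregular representation (B*, −ℓ∘*, ℓ∘* + r∘*). -/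
/-!
Pair everything with functionals `ξ₁ ⊗ ξ₂ ⊗ ξ₃`. Writing `r♯ ξ` once as `∑ ξ(xᵢ) yᵢ` and, by
symmetry of `r`, once as `∑ ξ(yᵢ) xᵢ`, the pairing of the Leibniz Yang–Baxter tensor with
`ξ₂ ⊗ ξ₁ ⊗ φ` becomes `φ` applied to the difference of the two sides of the O-operator equation
at `(ξ₁, ξ₂)`. Since elements of a tensor product of free modules are separated by such product
functionals, the two conditions are equivalent.
-/

open TensorProduct Module

section Separation

variable {R M N P : Type*} [CommRing R] [AddCommGroup M] [Module R M] [AddCommGroup N] [Module R N]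
  [AddCommGroup P] [Module R P]

theorem Module.Basis.tensorProduct_coord {ι κ : Type*} (b : Basis ι R M) (c : Basis κ R N)
    (i : ι) (j : κ) :
    (b.tensorProduct c).coord (i, j) = dualDistrib R M N (b.coord i ⊗ₜ c.coord j) :=
  TensorProduct.ext' fun m n => by simp [mul_comm]

theorem TensorProduct.eq_zero_of_forall_dualDistrib_dualDistrib_eq_zero
    [Free R M] [Free R N] [Free R P] (t : (M ⊗[R] N) ⊗[R] P)
    (h : ∀ (f : Dual R M) (g : Dual R N) (k : Dual R P),
      dualDistrib R (M ⊗[R] N) P (dualDistrib R M N (f ⊗ₜ g) ⊗ₜ k) t = 0) :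
    t = 0 := by
  let b := ((Free.chooseBasis R M).tensorProduct (Free.chooseBasis R N)).tensorProduct
    (Free.chooseBasis R P)
  refine b.repr.map_eq_zero_iff.mp (Finsupp.ext fun ⟨⟨i, j⟩, k⟩ => ?_)
  rw [← Basis.coord_apply, Basis.tensorProduct_coord, Basis.tensorProduct_coord]
  exact h _ _ _

end Separation

section LeibnizYangBaxter

variable {K B ι : Type*} [CommRing K] [AddCommGroup B] [Module K B] [Fintype ι]

/-- `r₁₂∘r₁₃ − r₁₂∘r₂₃ − r₂₃∘r₁₂ + r₂₃∘r₁₃` for `r = ∑ᵢ xᵢ ⊗ yᵢ`. -/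
def leibnizYBTensor (mul : B →ₗ[K] B →ₗ[K] B) (x y : ι → B) : (B ⊗[K] B) ⊗[K] B :=
  ∑ i, ∑ j,
    (((mul (x i) (x j)) ⊗ₜ[K] y i) ⊗ₜ[K] y j
      - (x i ⊗ₜ[K] mul (y i) (x j)) ⊗ₜ[K] y j
      - (x i ⊗ₜ[K] mul (x j) (y i)) ⊗ₜ[K] y j
      + (x i ⊗ₜ[K] x j) ⊗ₜ[K] mul (y j) (y i))

theorem dualDistrib_leibnizYBTensor (mul : B →ₗ[K] B →ₗ[K] B) (x y : ι → B)
    (ξ₁ ξ₂ ξ₃ : Dual K B) :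
    dualDistrib K (B ⊗[K] B) B (dualDistrib K B B (ξ₁ ⊗ₜ ξ₂) ⊗ₜ ξ₃) (leibnizYBTensor mul x y) =
      ∑ i, ∑ j,
        (ξ₁ (mul (x i) (x j)) * ξ₂ (y i) * ξ₃ (y j)
          - ξ₁ (x i) * ξ₂ (mul (y i) (x j)) * ξ₃ (y j)
          - ξ₁ (x i) * ξ₂ (mul (x j) (y i)) * ξ₃ (y j)
          + ξ₁ (x i) * ξ₂ (x j) * ξ₃ (mul (y j) (y i))) := by
  simp [leibnizYBTensor, dualDistrib_apply]

theorem Module.Dual.apply_bilin_sum_smul_sum_smul {κ : Type*} [Fintype κ]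
    (mul : B →ₗ[K] B →ₗ[K] B) (φ : Dual K B) (a : ι → K) (u : ι → B) (c : κ → K) (v : κ → B) :
    φ (mul (∑ i, a i • u i) (∑ j, c j • v j)) = ∑ i, ∑ j, a i * c j * φ (mul (u i) (v j)) := by
  simp only [map_sum, map_smul, LinearMap.sum_apply, LinearMap.smul_apply, smul_eq_mul,
    Finset.mul_sum]
  rw [Finset.sum_comm]
  simp only [mul_left_comm, mul_assoc]

theorem sum_apply_mul_apply_comm_of_sum_tmul_comm {x y : ι → B}
    (hsym : ∑ i, x i ⊗ₜ[K] y i = ∑ i, y i ⊗ₜ[K] x i) (φ ψ : Dual K B) :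
    ∑ i, φ (x i) * ψ (y i) = ∑ i, φ (y i) * ψ (x i) := by
  simpa [dualDistrib_apply] using congr(dualDistrib K B B (φ ⊗ₜ ψ) $hsym)

variable {x y : ι → B} {rs : Dual K B →ₗ[K] B}

theorem apply_comm_of_apply_eq_sum_mul (hsym : ∑ i, x i ⊗ₜ[K] y i = ∑ i, y i ⊗ₜ[K] x i)
    (hrs : ∀ ξ₁ ξ₂ : Dual K B, ξ₂ (rs ξ₁) = ∑ i, ξ₁ (x i) * ξ₂ (y i)) (φ ψ : Dual K B) :
    φ (rs ψ) = ψ (rs φ) := by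
  rw [hrs, hrs, sum_apply_mul_apply_comm_of_sum_tmul_comm hsym]
  simp_rw [mul_comm]

theorem apply_coregular_O_operator_rhs (mul : B →ₗ[K] B →ₗ[K] B)
    (hsymm : ∀ φ ψ : Dual K B, φ (rs ψ) = ψ (rs φ)) (ξ₁ ξ₂ φ : Dual K B) :
    φ (rs (-((mul (rs ξ₁)).dualMap ξ₂) + (mul (rs ξ₂)).dualMap ξ₁ + (mul.flip (rs ξ₂)).dualMap ξ₁))
      = -ξ₂ (mul (rs ξ₁) (rs φ)) + ξ₁ (mul (rs ξ₂) (rs φ)) + ξ₁ (mul (rs φ) (rs ξ₂)) := by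
  rw [hsymm]
  simp

variable [Free K B]

theorem eq_sum_smul_of_apply_eq_sum_mul
    (hrs : ∀ ξ₁ ξ₂ : Dual K B, ξ₂ (rs ξ₁) = ∑ i, ξ₁ (x i) * ξ₂ (y i)) (ξ : Dual K B) :
    rs ξ = ∑ i, ξ (x i) • y i := by
  rw [← sub_eq_zero, ← forall_dual_apply_eq_zero_iff K]
  intro φ
  simp [hrs, map_sum]

theorem dualDistrib_leibnizYBTensor_eq (mul : B →ₗ[K] B →ₗ[K] B)
    (hsym : ∑ i, x i ⊗ₜ[K] y i = ∑ i, y i ⊗ₜ[K] x i)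
    (hrs : ∀ ξ₁ ξ₂ : Dual K B, ξ₂ (rs ξ₁) = ∑ i, ξ₁ (x i) * ξ₂ (y i)) (ξ₁ ξ₂ ξ₃ : Dual K B) :
    dualDistrib K (B ⊗[K] B) B (dualDistrib K B B (ξ₁ ⊗ₜ ξ₂) ⊗ₜ ξ₃) (leibnizYBTensor mul x y) =
      ξ₁ (mul (rs ξ₂) (rs ξ₃)) - ξ₂ (mul (rs ξ₁) (rs ξ₃))
        - ξ₂ (mul (rs ξ₃) (rs ξ₁)) + ξ₃ (mul (rs ξ₂) (rs ξ₁)) := by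
  have hx := eq_sum_smul_of_apply_eq_sum_mul hrs
  have hy := eq_sum_smul_of_apply_eq_sum_mul (x := y) (y := x)
    fun ξ₁ ξ₂ => (hrs ξ₁ ξ₂).trans (sum_apply_mul_apply_comm_of_sum_tmul_comm hsym ξ₁ ξ₂)
  have h₁ : ξ₁ (mul (rs ξ₂) (rs ξ₃)) =
      ∑ i, ∑ j, ξ₂ (y i) * ξ₃ (y j) * ξ₁ (mul (x i) (x j)) := by
    rw [hy, hy, Dual.apply_bilin_sum_smul_sum_smul]
  have h₂ : ξ₂ (mul (rs ξ₁) (rs ξ₃)) =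
      ∑ i, ∑ j, ξ₁ (x i) * ξ₃ (y j) * ξ₂ (mul (y i) (x j)) := by
    rw [hx, hy, Dual.apply_bilin_sum_smul_sum_smul]
  have h₃ : ξ₂ (mul (rs ξ₃) (rs ξ₁)) =
      ∑ i, ∑ j, ξ₃ (y j) * ξ₁ (x i) * ξ₂ (mul (x j) (y i)) := by
    rw [hy, hx, Dual.apply_bilin_sum_smul_sum_smul, Finset.sum_comm]
  have h₄ : ξ₃ (mul (rs ξ₂) (rs ξ₁)) =
      ∑ i, ∑ j, ξ₂ (x j) * ξ₁ (x i) * ξ₃ (mul (y j) (y i)) := by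
    rw [hx, hx, Dual.apply_bilin_sum_smul_sum_smul, Finset.sum_comm]
  rw [dualDistrib_leibnizYBTensor, h₁, h₂, h₃, h₄]
  simp only [← Finset.sum_sub_distrib, ← Finset.sum_add_distrib]
  refine Finset.sum_congr rfl fun i _ => Finset.sum_congr rfl fun j _ => ?_
  ring

theorem dualDistrib_leibnizYBTensor_eq_apply_sub (mul : B →ₗ[K] B →ₗ[K] B)
    (hsym : ∑ i, x i ⊗ₜ[K] y i = ∑ i, y i ⊗ₜ[K] x i)
    (hrs : ∀ ξ₁ ξ₂ : Dual K B, ξ₂ (rs ξ₁) = ∑ i, ξ₁ (x i) * ξ₂ (y i)) (ξ₁ ξ₂ φ : Dual K B) :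
    dualDistrib K (B ⊗[K] B) B (dualDistrib K B B (ξ₂ ⊗ₜ ξ₁) ⊗ₜ φ) (leibnizYBTensor mul x y) =
      φ (mul (rs ξ₁) (rs ξ₂) - rs (-((mul (rs ξ₁)).dualMap ξ₂) + (mul (rs ξ₂)).dualMap ξ₁
        + (mul.flip (rs ξ₂)).dualMap ξ₁)) := by
  rw [dualDistrib_leibnizYBTensor_eq mul hsym hrs, map_sub,
    apply_coregular_O_operator_rhs mul (apply_comm_of_apply_eq_sum_mul hsym hrs)]
  ring

end LeibnizYangBaxter

theorem LYBE_iff_O_operator_general (K B : Type*) [Field K]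
    [AddCommGroup B] [Module K B]
    (mul : B →ₗ[K] B →ₗ[K] B)
    (m : ℕ) (x y : Fin m → B)
    (hsym : ∑ i, x i ⊗ₜ[K] y i = ∑ i, y i ⊗ₜ[K] x i)
    (rs : Module.Dual K B →ₗ[K] B)
    (hrs : ∀ ξ₁ ξ₂ : Module.Dual K B, ξ₂ (rs ξ₁) = ∑ i, ξ₁ (x i) * ξ₂ (y i)) :
    (∑ i, ∑ j,
        (((mul (x i) (x j)) ⊗ₜ[K] y i) ⊗ₜ[K] y j
          - (x i ⊗ₜ[K] mul (y i) (x j)) ⊗ₜ[K] y j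
          - (x i ⊗ₜ[K] mul (x j) (y i)) ⊗ₜ[K] y j
          + (x i ⊗ₜ[K] x j) ⊗ₜ[K] mul (y j) (y i)) = 0) ↔
    (∀ ξ₁ ξ₂ : Module.Dual K B,
      mul (rs ξ₁) (rs ξ₂) =
        rs (-((mul (rs ξ₁)).dualMap ξ₂)
            + (mul (rs ξ₂)).dualMap ξ₁ + (mul.flip (rs ξ₂)).dualMap ξ₁)) := by
  have key := dualDistrib_leibnizYBTensor_eq_apply_sub mul hsym hrs
  change leibnizYBTensor mul x y = 0 ↔ _
  constructor
  · intro h ξ₁ ξ₂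
    rw [← sub_eq_zero, ← forall_dual_apply_eq_zero_iff K]
    intro φ
    rw [← key, h, map_zero]
  · intro h
    refine eq_zero_of_forall_dualDistrib_dualDistrib_eq_zero _ fun ξ₂ ξ₁ φ => ?_
    rw [key, h, sub_self, map_zero]

/-- A symmetric `r ∈ B⊗B` is a solution of the Leibniz Yang–Baxter equation iff
`r♯` is an O-operator of `(B,∘)` associated to the coregular representation. -/
theorem LYBE_iff_O_operator (K B : Type*) [Field K] [CharZero K]
    [AddCommGroup B] [Module K B] [FiniteDimensional K B]
    (mul : B →ₗ[K] B →ₗ[K] B)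
    (hleib : ∀ b₁ b₂ b₃ : B,
      mul b₁ (mul b₂ b₃) = mul (mul b₁ b₂) b₃ + mul b₂ (mul b₁ b₃))
    (m : ℕ) (x y : Fin m → B)
    (hsym : ∑ i, x i ⊗ₜ[K] y i = ∑ i, y i ⊗ₜ[K] x i)
    (rs : Module.Dual K B →ₗ[K] B)
    (hrs : ∀ ξ₁ ξ₂ : Module.Dual K B, ξ₂ (rs ξ₁) = ∑ i, ξ₁ (x i) * ξ₂ (y i)) :
    (∑ i, ∑ j,
        (((mul (x i) (x j)) ⊗ₜ[K] y i) ⊗ₜ[K] y j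
          - (x i ⊗ₜ[K] mul (y i) (x j)) ⊗ₜ[K] y j
          - (x i ⊗ₜ[K] mul (x j) (y i)) ⊗ₜ[K] y j
          + (x i ⊗ₜ[K] x j) ⊗ₜ[K] mul (y j) (y i)) = 0) ↔
    (∀ ξ₁ ξ₂ : Module.Dual K B,
      mul (rs ξ₁) (rs ξ₂) =
        rs (-((mul (rs ξ₁)).dualMap ξ₂)
            + (mul (rs ξ₂)).dualMap ξ₁ + (mul.flip (rs ξ₂)).dualMap ξ₁)) :=
  LYBE_iff_O_operator_general K B mul m x y hsym rs hrs
end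

section
/- Let (A,·) be a finite-dimensional Zinbiel algebra and ϖ a nondegenerate symmetric bilinear form on A with basis {eᵢ} and ϖ-dual basis {fᵢ}. Then r = Σᵢ eᵢ⊗fᵢ is a symmetric solution of the Zinbiel Yang–Baxter equation if and only if ϖ satisfies ϖ(a₁·a₂, a₃) − ϖ(a₁·a₃ + a₃·a₁, a₂) + ϖ(a₃·a₂, a₁) = 0 for all a₁,a₂,a₃ (i.e., (A,·,ϖ) is quasi-Frobenius). -/
open TensorProduct

/-!
Pair the Yang–Baxter tensor with `a₃ ⊗ a₁ ⊗ a₂` through `ϖ`. Since `(eᵢ)` and `(fᵢ)` are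
`ϖ`-dual bases of each other, `x = ∑ᵢ ϖ(fᵢ, x) eᵢ = ∑ᵢ ϖ(eᵢ, x) fᵢ`, so each of the eight double
sums contracts to a single value of `ϖ` on a product, and together they give
`ϖ(a₁a₂, a₃) − ϖ(a₁a₃ + a₃a₁, a₂) + ϖ(a₃a₂, a₁)`. At basis vectors these pairings are the
coordinates of the tensor, so it vanishes exactly when `(A, ·, ϖ)` is quasi-Frobenius. The
symmetry of `r = ∑ᵢ eᵢ ⊗ fᵢ` follows from that of `ϖ` alone.
-/

namespace LinearMap

section DualFamily

variable {R M ι : Type*} [CommRing R] [AddCommGroup M] [Module R M] [DecidableEq ι]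
  (B : M →ₗ[R] M →ₗ[R] R)

def IsDualFamily (b g : ι → M) : Prop :=
  ∀ i j, B (g j) (b i) = if i = j then 1 else 0

variable {B} {g : ι → M}

theorem IsDualFamily.flip {b : ι → M} (h : IsDualFamily B b g) : IsDualFamily B.flip g b :=
  fun i j => by simp [h j i, eq_comm]

theorem IsDualFamily.apply_eq_coord {b : Module.Basis ι R M} (h : IsDualFamily B b g) (j : ι) :
    B (g j) = b.coord j :=
  b.ext fun i => by simp [h i j, Finsupp.single_apply, eq_comm]

variable [Fintype ι]

theorem IsDualFamily.sum_apply_smul_eq {b : Module.Basis ι R M} (h : IsDualFamily B b g)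
    (x : M) : ∑ i, B (g i) x • b i = x := by
  simp only [h.apply_eq_coord, Module.Basis.coord_apply]
  exact b.sum_repr x

theorem IsDualFamily.linearIndependent {b : Module.Basis ι R M} (h : IsDualFamily B b g) :
    LinearIndependent R g := by
  refine LinearIndependent.of_comp B ?_
  convert b.dualBasis.linearIndependent
  ext1 j
  simp [h.apply_eq_coord]

end DualFamily

section DualBasis

variable {K V ι : Type*} [Field K] [AddCommGroup V] [Module K V] [Fintype ι] [DecidableEq ι]
  {B : V →ₗ[K] V →ₗ[K] K} {b : Module.Basis ι K V} {g : ι → V}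

noncomputable def IsDualFamily.basis (h : IsDualFamily B b g) : Module.Basis ι K V :=
  haveI := Module.Finite.of_basis b
  basisOfLinearIndependentOfCardEqFinrank' g h.linearIndependent
    (Module.finrank_eq_card_basis b).symm

@[simp]
theorem IsDualFamily.coe_basis (h : IsDualFamily B b g) : ⇑h.basis = g := by
  simp [IsDualFamily.basis]

theorem IsDualFamily.flip_basis (h : IsDualFamily B b g) : IsDualFamily B.flip h.basis b := by
  rw [h.coe_basis]
  exact h.flip

theorem IsDualFamily.sum_flip_apply_smul_eq (h : IsDualFamily B b g) (x : V) :
    ∑ i, B x (b i) • g i = x := by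
  simpa using h.flip_basis.sum_apply_smul_eq x

end DualBasis

section Pairing

variable {R M ι : Type*} [CommRing R] [AddCommGroup M] [Module R M] (B : M →ₗ[R] M →ₗ[R] R)

noncomputable def pairing₃ (a b c : M) : Module.Dual R ((M ⊗[R] M) ⊗[R] M) :=
  dualDistrib R _ _ (dualDistrib R M M (B.flip a ⊗ₜ B.flip b) ⊗ₜ B.flip c)

@[simp]
theorem pairing₃_tmul (a b c x y z : M) :
    B.pairing₃ a b c ((x ⊗ₜ y) ⊗ₜ z) = B x a * B y b * B z c := rfl

theorem eq_zero_of_forall_pairing₃_eq_zero [DecidableEq ι] {b : Module.Basis ι R M}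
    {d : ι → M} (hd : IsDualFamily B.flip b d) {t : (M ⊗[R] M) ⊗[R] M}
    (ht : ∀ i j k, B.pairing₃ (d i) (d j) (d k) t = 0) : t = 0 := by
  have hrepr (i j k : ι) : ((b.tensorProduct b).tensorProduct b).repr t ((i, j), k) =
      B.pairing₃ (d i) (d j) (d k) t := by
    have : Finsupp.lapply ((i, j), k) ∘ₗ ((b.tensorProduct b).tensorProduct b).repr.toLinearMap =
        B.pairing₃ (d i) (d j) (d k) := by
      refine TensorProduct.ext_threefold fun x y z => ?_
      simp only [coe_comp, LinearEquiv.coe_coe, Function.comp_apply, Finsupp.lapply_apply,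
        Module.Basis.tensorProduct_repr_tmul_apply, smul_eq_mul, pairing₃_tmul,
        ← flip_apply (f := B), hd.apply_eq_coord, Module.Basis.coord_apply]
      ring
    exact LinearMap.congr_fun this t
  exact ((b.tensorProduct b).tensorProduct b).ext_elem fun ⟨⟨i, j⟩, k⟩ => by simp [hrepr, ht]

theorem sum_sum_mul_mul_eq [Fintype ι] {u v u' v' : ι → M}
    (hu : ∀ x, ∑ i, B (v i) x • u i = x) (hu' : ∀ x, ∑ i, B (v' i) x • u' i = x)
    (β : M →ₗ[R] M →ₗ[R] R) (x y : M) :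
    ∑ i, ∑ j, B (v i) x * B (v' j) y * β (u i) (u' j) = β x y := by
  conv_rhs => rw [← hu x, ← hu' y]
  simp only [map_sum, map_smul, coe_sum, Finset.sum_apply, smul_apply, smul_eq_mul,
    Finset.mul_sum]
  rw [Finset.sum_comm]
  simp only [mul_left_comm, mul_assoc]

end Pairing

section ZinbielYangBaxter

variable {R M ι : Type*} [CommRing R] [AddCommGroup M] [Module R M] [Fintype ι]

/-- `r₁₃·r₂₁ + r₂₁·r₁₃ + r₁₂·r₂₃ + r₂₃·r₁₂ − r₁₃·r₂₃ − r₂₃·r₁₃ − r₁₃·r₁₂ − r₂₃·r₂₁` for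
`r = ∑ᵢ eᵢ ⊗ fᵢ`, written in `(M ⊗ M) ⊗ M`. -/
noncomputable def zinbielYangBaxter (mul : M →ₗ[R] M →ₗ[R] M) (e f : ι → M) :
    (M ⊗[R] M) ⊗[R] M :=
  ∑ i, ∑ j,
    ((mul (e i) (f j) ⊗ₜ[R] e j) ⊗ₜ[R] f i
      + (mul (f j) (e i) ⊗ₜ[R] e j) ⊗ₜ[R] f i
      + (e i ⊗ₜ[R] mul (f i) (e j)) ⊗ₜ[R] f j
      + (e i ⊗ₜ[R] mul (e j) (f i)) ⊗ₜ[R] f j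
      - (e i ⊗ₜ[R] e j) ⊗ₜ[R] mul (f i) (f j)
      - (e i ⊗ₜ[R] e j) ⊗ₜ[R] mul (f j) (f i)
      - (mul (e i) (e j) ⊗ₜ[R] f j) ⊗ₜ[R] f i
      - (f j ⊗ₜ[R] mul (e i) (e j)) ⊗ₜ[R] f i)

variable (B : M →ₗ[R] M →ₗ[R] R) (mul : M →ₗ[R] M →ₗ[R] M) {e f : ι → M}

theorem pairing₃_zinbielYangBaxter (he : ∀ x, ∑ i, B (f i) x • e i = x)
    (hf : ∀ x, ∑ i, B (e i) x • f i = x) (a₁ a₂ a₃ : M) :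
    B.pairing₃ a₃ a₁ a₂ (zinbielYangBaxter mul e f) =
      B (mul a₁ a₂) a₃ - B (mul a₁ a₃ + mul a₃ a₁) a₂ + B (mul a₃ a₂) a₁ := by
  -- the eight double sums, in the order of the terms and up to the order of the factors
  have h₁ := sum_sum_mul_mul_eq B he hf (mul.compr₂ (B.flip a₃)) a₂ a₁
  have h₂ := sum_sum_mul_mul_eq B he hf (mul.compr₂ (B.flip a₃)).flip a₂ a₁
  have h₃ := sum_sum_mul_mul_eq B hf he (mul.compr₂ (B.flip a₁)) a₃ a₂
  have h₄ := sum_sum_mul_mul_eq B hf he (mul.compr₂ (B.flip a₁)).flip a₃ a₂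
  have h₅ := sum_sum_mul_mul_eq B hf hf (mul.compr₂ (B.flip a₂)) a₃ a₁
  have h₆ := sum_sum_mul_mul_eq B hf hf (mul.compr₂ (B.flip a₂)).flip a₃ a₁
  have h₇ := sum_sum_mul_mul_eq B he he (mul.compr₂ (B.flip a₃)) a₂ a₁
  have h₈ := sum_sum_mul_mul_eq B he he (mul.compr₂ (B.flip a₁)) a₂ a₃
  simp only [compr₂_apply, flip_apply] at h₁ h₂ h₃ h₄ h₅ h₆ h₇ h₈
  simp only [zinbielYangBaxter, map_sum, map_add, map_sub, add_apply, pairing₃_tmul,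
    Finset.sum_add_distrib, Finset.sum_sub_distrib]
  ac_nf at h₁ h₂ h₃ h₄ h₅ h₆ h₇ h₈ ⊢
  rw [h₁, h₂, h₃, h₄, h₅, h₆, h₇, h₈]
  ring

theorem sum_tmul_comm_of_sum_apply_smul_eq (hsym : ∀ a b, B a b = B b a)
    (he : ∀ x, ∑ i, B (f i) x • e i = x) :
    ∑ i, e i ⊗ₜ[R] f i = ∑ i, f i ⊗ₜ[R] e i := by
  conv_lhs => enter [2, i]; rw [← he (f i)]
  conv_rhs => enter [2, i]; rw [← he (f i)]
  simp only [tmul_sum, sum_tmul, tmul_smul, smul_tmul']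
  rw [Finset.sum_comm]
  simp only [hsym]

end ZinbielYangBaxter

theorem zinbielYangBaxter_eq_zero_iff {K V ι : Type*} [Field K] [AddCommGroup V] [Module K V]
    [Fintype ι] [DecidableEq ι] (B : V →ₗ[K] V →ₗ[K] K) (mul : V →ₗ[K] V →ₗ[K] V)
    {e : Module.Basis ι K V} {f : ι → V}
    (hsym : ∀ a b, B a b = B b a) (hdual : IsDualFamily B e f) :
    zinbielYangBaxter mul e f = 0 ↔
      ∀ a₁ a₂ a₃, B (mul a₁ a₂) a₃ - B (mul a₁ a₃ + mul a₃ a₁) a₂ + B (mul a₃ a₂) a₁ = 0 := by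
  have hf (x : V) : ∑ i, B (e i) x • f i = x := by
    simpa [hsym x] using hdual.sum_flip_apply_smul_eq x
  simp only [← pairing₃_zinbielYangBaxter B mul hdual.sum_apply_smul_eq hf]
  constructor
  · intro h a₁ a₂ a₃
    rw [h, map_zero]
  · intro h
    exact eq_zero_of_forall_pairing₃_eq_zero B hdual.flip_basis fun i j k => h _ _ _

end LinearMap

theorem ZYBE_iff_quasiFrobenius_general (K A : Type*) [Field K]
    [AddCommGroup A] [Module K A]
    (mul : A →ₗ[K] A →ₗ[K] A)
    (ϖ : A →ₗ[K] A →ₗ[K] K)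
    (hsym : ∀ a b : A, ϖ a b = ϖ b a)
    (n : ℕ) (e : Module.Basis (Fin n) K A) (f : Fin n → A)
    (hdual : ∀ i j : Fin n, ϖ (f j) (e i) = if i = j then 1 else 0) :
    ((∑ i : Fin n, (e i : A) ⊗ₜ[K] f i = ∑ i : Fin n, f i ⊗ₜ[K] (e i : A)) ∧
      ∑ i : Fin n, ∑ j : Fin n,
        (((mul (e i) (f j)) ⊗ₜ[K] (e j : A)) ⊗ₜ[K] f i
          + ((mul (f j) (e i)) ⊗ₜ[K] (e j : A)) ⊗ₜ[K] f i
          + ((e i : A) ⊗ₜ[K] (mul (f i) (e j))) ⊗ₜ[K] f j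
          + ((e i : A) ⊗ₜ[K] (mul (e j) (f i))) ⊗ₜ[K] f j
          - ((e i : A) ⊗ₜ[K] (e j : A)) ⊗ₜ[K] (mul (f i) (f j))
          - ((e i : A) ⊗ₜ[K] (e j : A)) ⊗ₜ[K] (mul (f j) (f i))
          - ((mul (e i) (e j)) ⊗ₜ[K] f j) ⊗ₜ[K] f i
          - (f j ⊗ₜ[K] (mul (e i) (e j))) ⊗ₜ[K] f i) = 0) ↔
    (∀ a₁ a₂ a₃ : A,
      ϖ (mul a₁ a₂) a₃ - ϖ (mul a₁ a₃ + mul a₃ a₁) a₂ + ϖ (mul a₃ a₂) a₁ = 0) := by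
  have hdual : LinearMap.IsDualFamily ϖ e f := hdual
  rw [and_iff_right (LinearMap.sum_tmul_comm_of_sum_apply_smul_eq ϖ hsym hdual.sum_apply_smul_eq)]
  exact LinearMap.zinbielYangBaxter_eq_zero_iff ϖ mul hsym hdual

/-- For a Zinbiel algebra with a nondegenerate symmetric bilinear form ϖ,
`r = Σᵢ eᵢ⊗fᵢ` is a symmetric solution of the Zinbiel Yang–Baxter equation iff
`(A,·,ϖ)` is a quasi-Frobenius Zinbiel algebra. -/
theorem ZYBE_iff_quasiFrobenius (K A : Type*) [Field K] [CharZero K]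
    [AddCommGroup A] [Module K A] [FiniteDimensional K A]
    (mul : A →ₗ[K] A →ₗ[K] A)
    (hz : ∀ a₁ a₂ a₃ : A,
      mul a₁ (mul a₂ a₃) = mul (mul a₁ a₂) a₃ + mul (mul a₂ a₁) a₃)
    (ϖ : A →ₗ[K] A →ₗ[K] K)
    (hsym : ∀ a b : A, ϖ a b = ϖ b a)
    (hnd : ∀ a : A, (∀ b : A, ϖ a b = 0) → a = 0)
    (n : ℕ) (e : Module.Basis (Fin n) K A) (f : Fin n → A)
    (hdual : ∀ i j : Fin n, ϖ (f j) (e i) = if i = j then 1 else 0) :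
    ((∑ i : Fin n, (e i : A) ⊗ₜ[K] f i = ∑ i : Fin n, f i ⊗ₜ[K] (e i : A)) ∧
      ∑ i : Fin n, ∑ j : Fin n,
        (((mul (e i) (f j)) ⊗ₜ[K] (e j : A)) ⊗ₜ[K] f i
          + ((mul (f j) (e i)) ⊗ₜ[K] (e j : A)) ⊗ₜ[K] f i
          + ((e i : A) ⊗ₜ[K] (mul (f i) (e j))) ⊗ₜ[K] f j
          + ((e i : A) ⊗ₜ[K] (mul (e j) (f i))) ⊗ₜ[K] f j
          - ((e i : A) ⊗ₜ[K] (e j : A)) ⊗ₜ[K] (mul (f i) (f j))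
          - ((e i : A) ⊗ₜ[K] (e j : A)) ⊗ₜ[K] (mul (f j) (f i))
          - ((mul (e i) (e j)) ⊗ₜ[K] f j) ⊗ₜ[K] f i
          - (f j ⊗ₜ[K] (mul (e i) (e j))) ⊗ₜ[K] f i) = 0) ↔
    (∀ a₁ a₂ a₃ : A,
      ϖ (mul a₁ a₂) a₃ - ϖ (mul a₁ a₃ + mul a₃ a₁) a₂ + ϖ (mul a₃ a₂) a₁ = 0) :=
  ZYBE_iff_quasiFrobenius_general K A mul ϖ hsym n e f hdual
end

section
/- Let (A,·,ϖ) be a quasi-Frobenius Zinbiel algebra, (B,∘,ω) a quadratic Leibniz algebra, and [−,−] the induced Lie bracket on A⊗B. Then B(a₁⊗b₁, a₂⊗b₂) := ϖ(a₁,a₂)ω(b₁,b₂) is a skew-symmetric nondegenerate bilinear form on A⊗B satisfying the 2-cocycle condition B([g₁,g₂],g₃) + B([g₃,g₁],g₂) + B([g₂,g₃],g₁) = 0, i.e., (A⊗B, [−,−], B) is a quasi-Frobenius Lie algebra. -/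
open TensorProduct

set_option maxHeartbeats 1600000 in
/-- The tensor product of a quasi-Frobenius Zinbiel algebra and a quadratic Leibniz
algebra is a quasi-Frobenius Lie algebra. -/
theorem tensor_quasiFrobenius_lie (K A B : Type*) [Field K] [CharZero K]
    [AddCommGroup A] [Module K A] [FiniteDimensional K A]
    [AddCommGroup B] [Module K B] [FiniteDimensional K B]
    (mulA : A →ₗ[K] A →ₗ[K] A)
    (hz : ∀ a₁ a₂ a₃ : A,
      mulA a₁ (mulA a₂ a₃) = mulA (mulA a₁ a₂) a₃ + mulA (mulA a₂ a₁) a₃)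
    (ϖ : A →ₗ[K] A →ₗ[K] K)
    (hϖsym : ∀ a b : A, ϖ a b = ϖ b a)
    (hϖnd : ∀ a : A, (∀ b : A, ϖ a b = 0) → a = 0)
    (hqF : ∀ a₁ a₂ a₃ : A,
      ϖ (mulA a₁ a₂) a₃ - ϖ (mulA a₁ a₃ + mulA a₃ a₁) a₂ + ϖ (mulA a₃ a₂) a₁ = 0)
    (mulB : B →ₗ[K] B →ₗ[K] B)
    (hleib : ∀ b₁ b₂ b₃ : B,
      mulB b₁ (mulB b₂ b₃) = mulB (mulB b₁ b₂) b₃ + mulB b₂ (mulB b₁ b₃))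
    (ω : B →ₗ[K] B →ₗ[K] K)
    (hωskew : ∀ b₁ b₂ : B, ω b₁ b₂ = -ω b₂ b₁)
    (hωnd : ∀ b : B, (∀ c : B, ω b c = 0) → b = 0)
    (hωinv : ∀ b₁ b₂ b₃ : B, ω (mulB b₁ b₂) b₃ = ω b₁ (mulB b₂ b₃ + mulB b₃ b₂))
    (br : A ⊗[K] B →ₗ[K] A ⊗[K] B →ₗ[K] A ⊗[K] B)
    (hbr : ∀ (a₁ a₂ : A) (b₁ b₂ : B),
      br (a₁ ⊗ₜ[K] b₁) (a₂ ⊗ₜ[K] b₂)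
        = (mulA a₁ a₂) ⊗ₜ[K] (mulB b₁ b₂) - (mulA a₂ a₁) ⊗ₜ[K] (mulB b₂ b₁))
    (Bf : A ⊗[K] B →ₗ[K] A ⊗[K] B →ₗ[K] K)
    (hBf : ∀ (a₁ a₂ : A) (b₁ b₂ : B),
      Bf (a₁ ⊗ₜ[K] b₁) (a₂ ⊗ₜ[K] b₂) = ϖ a₁ a₂ * ω b₁ b₂) :
    (∀ g₁ g₂ : A ⊗[K] B, Bf g₁ g₂ = -Bf g₂ g₁) ∧
    (∀ g : A ⊗[K] B, (∀ h : A ⊗[K] B, Bf g h = 0) → g = 0) ∧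
    (∀ g₁ g₂ g₃ : A ⊗[K] B,
      Bf (br g₁ g₂) g₃ + Bf (br g₃ g₁) g₂ + Bf (br g₂ g₃) g₁ = 0) := by
  -- skew symmetry
  have hskew : ∀ g₁ g₂ : A ⊗[K] B, Bf g₁ g₂ = -Bf g₂ g₁ := by
    have h : Bf = -Bf.flip := by
      apply TensorProduct.ext'
      intro a b
      apply TensorProduct.ext'
      intro a' b'
      simp only [LinearMap.neg_apply, LinearMap.flip_apply, hBf]
      rw [hϖsym a a', hωskew b b']
      ring
    intro g₁ g₂
    conv_lhs => rw [h]
    simp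
  refine ⟨hskew, ?_, ?_⟩
  · -- nondegeneracy
    have hϖinj : Function.Injective ϖ := by
      rw [← LinearMap.ker_eq_bot, LinearMap.ker_eq_bot']
      intro a ha
      exact hϖnd a fun b => by rw [ha]; rfl
    have hωinj : Function.Injective ω := by
      rw [← LinearMap.ker_eq_bot, LinearMap.ker_eq_bot']
      intro b hb
      exact hωnd b fun c => by rw [hb]; rfl
    set eA : A ≃ₗ[K] Module.Dual K A :=
      ϖ.linearEquivOfInjective hϖinj (Subspace.dual_finrank_eq (K := K) (V := A)).symm with heA
    set eB : B ≃ₗ[K] Module.Dual K B :=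
      ω.linearEquivOfInjective hωinj (Subspace.dual_finrank_eq (K := K) (V := B)).symm with heB
    set E : A ⊗[K] B ≃ₗ[K] Module.Dual K (A ⊗[K] B) :=
      (TensorProduct.congr eA eB).trans (TensorProduct.dualDistribEquiv K A B) with hE
    have hEeq : ∀ g h : A ⊗[K] B, E g h = Bf g h := by
      have : (E : A ⊗[K] B →ₗ[K] Module.Dual K (A ⊗[K] B)) = Bf := by
        apply TensorProduct.ext'
        intro a b
        apply LinearMap.ext
        intro g
        induction g using TensorProduct.induction_on with
        | zero => simp
        | tmul a' b' =>
          simp only [hE, heA, heB, LinearEquiv.coe_coe, LinearEquiv.trans_apply,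
            TensorProduct.congr_tmul, LinearMap.linearEquivOfInjective_apply, hBf]
          erw [TensorProduct.dualDistribEquivOfBasis_apply_apply]
          simp
        | add x y hx hy => simp only [map_add, hx, hy]
      intro g h
      rw [← this]
      rfl
    intro g hg
    have : E g = 0 := by
      apply LinearMap.ext
      intro h
      rw [hEeq]
      simpa using hg h
    have h0 : E g = E 0 := by rw [this, map_zero]
    exact E.injective h0
  · -- cocycle
    have wsym : ∀ x y z : B, ω (mulB x y) z = ω (mulB x z) y := by
      intro x y z
      have h1 := hωinv x y z
      have h2 := hωinv x z y
      rw [map_add] at h1 h2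
      linear_combination h1 - h2
    have wcyc : ∀ x y z : B,
        ω (mulB x y) z + ω (mulB y x) z + ω (mulB z x) y = 0 := by
      intro x y z
      have h1 := hωinv x y z
      rw [map_add] at h1
      have h2 := hωskew x (mulB y z)
      have h3 := hωskew x (mulB z y)
      -- h1 : ω (x∘y) z = ω x (y∘z) + ω x (z∘y)
      -- ω x (y∘z) = -ω (y∘z) x, ω x (z∘y) = -ω (z∘y) x
      -- so ω(x∘y) z + ω(y∘z) x + ω(z∘y) x = 0; then use wsym
      have h4 := wsym y z x  -- ω (y∘z) x = ω (y∘x) z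
      have h5 := wsym z y x  -- ω (z∘y) x = ω (z∘x) y
      linear_combination h1 + h2 + h3 - h4 - h5
    have key : ∀ (a₁ a₂ a₃ : A) (b₁ b₂ b₃ : B),
        Bf (br (a₁ ⊗ₜ[K] b₁) (a₂ ⊗ₜ[K] b₂)) (a₃ ⊗ₜ[K] b₃)
        + Bf (br (a₃ ⊗ₜ[K] b₃) (a₁ ⊗ₜ[K] b₁)) (a₂ ⊗ₜ[K] b₂)
        + Bf (br (a₂ ⊗ₜ[K] b₂) (a₃ ⊗ₜ[K] b₃)) (a₁ ⊗ₜ[K] b₁) = 0 := by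
      intro a₁ a₂ a₃ b₁ b₂ b₃
      have R1 := hqF a₁ a₂ a₃
      have R2 := hqF a₂ a₃ a₁
      rw [map_add, LinearMap.add_apply] at R1 R2
      have E1 := wsym b₁ b₃ b₂  -- ω(b₁∘b₃) b₂ = ω(b₁∘b₂) b₃
      have E2 := wsym b₂ b₃ b₁  -- ω(b₂∘b₃) b₁ = ω(b₂∘b₁) b₃
      have E3 := wsym b₃ b₂ b₁  -- ω(b₃∘b₂) b₁ = ω(b₃∘b₁) b₂
      have C := wcyc b₁ b₂ b₃   -- ω(b₁∘b₂)b₃ + ω(b₂∘b₁)b₃ + ω(b₃∘b₁)b₂ = 0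
      simp only [hbr, map_sub, LinearMap.sub_apply, hBf]
      linear_combination (ω (mulB b₁ b₂) b₃ + ω (mulB b₂ b₁) b₃) * R1
        + (ω (mulB b₂ b₁) b₃) * R2
        + (ϖ (mulA a₃ a₁) a₂ - ϖ (mulA a₃ a₂) a₁) * C
        - (ϖ (mulA a₁ a₃) a₂) * E1 + (ϖ (mulA a₂ a₃) a₁) * E2 - (ϖ (mulA a₃ a₂) a₁) * E3
    intro g₁ g₂ g₃
    induction g₁ using TensorProduct.induction_on with
    | zero => simp
    | add x y hx hy =>
      simp only [map_add, LinearMap.add_apply]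
      linear_combination hx + hy
    | tmul a₁ b₁ =>
      induction g₂ using TensorProduct.induction_on with
      | zero => simp
      | add x y hx hy =>
        simp only [map_add, LinearMap.add_apply]
        linear_combination hx + hy
      | tmul a₂ b₂ =>
        induction g₃ using TensorProduct.induction_on with
        | zero => simp
        | add x y hx hy =>
          simp only [map_add, LinearMap.add_apply]
          linear_combination hx + hy
        | tmul a₃ b₃ => exact key a₁ a₂ a₃ b₁ b₂ b₃
end

section
/- Let V be a 4-dimensional vector space with basis {v₁,v₂,v₃,v₄} and bilinear product ⋄ whose nonzero products are v₁⋄v₂ = v₁ = −v₂⋄v₁, v₁⋄v₃ = −v₄, v₂⋄v₃ = v₃. Then (V,⋄) is a Leibniz algebra, and the bilinear form ω with ω(v₁,v₃) = 1 = −ω(v₃,v₁), ω(v₂,v₄) = 1 = −ω(v₄,v₂) (all other basis pairings zero) is a nondegenerate skew-symmetric invariant form, so (V,⋄,ω) is a quadratic Leibniz algebra. -/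
/-!
All four properties are multilinear in their arguments, so they only need to be checked on basis
vectors, where they reduce to a finite computation with the multiplication table. Nondegeneracy
follows because the Gram matrix of `ω` is a signed permutation matrix, of determinant `1`.
-/

namespace LinearMap

variable {R M N ι : Type*} [CommSemiring R] [AddCommMonoid M] [Module R M]
  [AddCommMonoid N] [Module R N]

theorem ext_basis₃ (b : Module.Basis ι R M) {f g : M →ₗ[R] M →ₗ[R] M →ₗ[R] N}
    (h : ∀ i j k, f (b i) (b j) (b k) = g (b i) (b j) (b k)) : f = g :=
  ext_basis b b fun i j ↦ b.ext fun k ↦ h i j k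

end LinearMap

section OfBasis

variable {R M ι : Type*} [AddCommMonoid M]

theorem leibniz_of_basis [CommSemiring R] [Module R M] (v : Module.Basis ι R M)
    (mul : M →ₗ[R] M →ₗ[R] M)
    (h : ∀ i j k, mul (v i) (mul (v j) (v k)) =
      mul (mul (v i) (v j)) (v k) + mul (v j) (mul (v i) (v k)))
    (b₁ b₂ b₃ : M) : mul b₁ (mul b₂ b₃) = mul (mul b₁ b₂) b₃ + mul b₂ (mul b₁ b₃) := by
  have key := LinearMap.ext_basis₃ v (f := (LinearMap.llcomp R M M M).compl₁₂ mul mul)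
    (g := mul.compr₂ mul + ((LinearMap.llcomp R M M M).compl₁₂ mul mul).flip) (by simpa using h)
  simpa using congr($key b₁ b₂ b₃)

theorem invariant_of_basis [CommSemiring R] [Module R M] (v : Module.Basis ι R M)
    (mul : M →ₗ[R] M →ₗ[R] M) (ω : M →ₗ[R] M →ₗ[R] R)
    (h : ∀ i j k, ω (mul (v i) (v j)) (v k) = ω (v i) (mul (v j) (v k) + mul (v k) (v j)))
    (b₁ b₂ b₃ : M) : ω (mul b₁ b₂) b₃ = ω b₁ (mul b₂ b₃ + mul b₃ b₂) := by
  have key := LinearMap.ext_basis₃ v (f := mul.compr₂ ω)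
    (g := (LinearMap.llcomp R M M R).compl₁₂ ω (mul + mul.flip)) (by simpa using h)
  simpa using congr($key b₁ b₂ b₃)

theorem skew_of_basis [CommRing R] [Module R M] (v : Module.Basis ι R M)
    (ω : M →ₗ[R] M →ₗ[R] R) (h : ∀ i j, ω (v i) (v j) = -ω (v j) (v i)) (b₁ b₂ : M) :
    ω b₁ b₂ = -ω b₂ b₁ := by
  have key := LinearMap.ext_basis v v (B := ω) (B' := -ω.flip) (by simpa using h)
  simpa using congr($key b₁ b₂)

end OfBasis

theorem dim4_quadratic_leibniz_general (K V : Type*) [Field K]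
    [AddCommGroup V] [Module K V]
    (v : Module.Basis (Fin 4) K V)
    (mul : V →ₗ[K] V →ₗ[K] V)
    (hmul : ∀ i j : Fin 4,
      mul (v i) (v j) =
        if i = 0 ∧ j = 1 then v 0
        else if i = 1 ∧ j = 0 then -(v 0 : V)
        else if i = 0 ∧ j = 2 then -(v 3 : V)
        else if i = 1 ∧ j = 2 then v 2
        else 0)
    (ω : V →ₗ[K] V →ₗ[K] K)
    (hω : ∀ i j : Fin 4,
      ω (v i) (v j) =
        if i = 0 ∧ j = 2 then 1
        else if i = 2 ∧ j = 0 then -1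
        else if i = 1 ∧ j = 3 then 1
        else if i = 3 ∧ j = 1 then -1
        else 0) :
    (∀ b₁ b₂ b₃ : V,
      mul b₁ (mul b₂ b₃) = mul (mul b₁ b₂) b₃ + mul b₂ (mul b₁ b₃)) ∧
    (∀ b₁ b₂ : V, ω b₁ b₂ = -ω b₂ b₁) ∧
    (∀ b₁ b₂ b₃ : V, ω (mul b₁ b₂) b₃ = ω b₁ (mul b₂ b₃ + mul b₃ b₂)) ∧
    (∀ b : V, (∀ c : V, ω b c = 0) → b = 0) := by
  have gram : LinearMap.toMatrix₂ v v ω = !![0, 0, 1, 0; 0, 0, 0, 1; -1, 0, 0, 0; 0, -1, 0, 0] := by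
    ext i j
    fin_cases i <;> fin_cases j <;> simp [LinearMap.toMatrix₂_apply, hω]
  refine ⟨leibniz_of_basis v mul ?_, skew_of_basis v ω ?_, invariant_of_basis v mul ω ?_,
    LinearMap.separatingLeft_of_det_ne_zero v ?_⟩
  · intro i j k
    fin_cases i <;> fin_cases j <;> fin_cases k <;> simp [hmul]
  · intro i j
    fin_cases i <;> fin_cases j <;> simp [hω]
  · intro i j k
    fin_cases i <;> fin_cases j <;> fin_cases k <;> simp [hmul, hω]
  · simp [gram, Matrix.det_succ_row_zero, Fin.sum_univ_succ, Fin.succAbove]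

/-- The 4-dimensional algebra with `v₁⋄v₂ = v₁ = −v₂⋄v₁`, `v₁⋄v₃ = −v₄`, `v₂⋄v₃ = v₃`
(other products zero) is a Leibniz algebra, and the form ω with
`ω(v₁,v₃) = 1 = −ω(v₃,v₁)`, `ω(v₂,v₄) = 1 = −ω(v₄,v₂)` (other pairings zero)
makes it a quadratic Leibniz algebra. -/
theorem dim4_quadratic_leibniz (K V : Type*) [Field K] [CharZero K]
    [AddCommGroup V] [Module K V]
    (v : Module.Basis (Fin 4) K V)
    (mul : V →ₗ[K] V →ₗ[K] V)
    (hmul : ∀ i j : Fin 4,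
      mul (v i) (v j) =
        if i = 0 ∧ j = 1 then v 0
        else if i = 1 ∧ j = 0 then -(v 0 : V)
        else if i = 0 ∧ j = 2 then -(v 3 : V)
        else if i = 1 ∧ j = 2 then v 2
        else 0)
    (ω : V →ₗ[K] V →ₗ[K] K)
    (hω : ∀ i j : Fin 4,
      ω (v i) (v j) =
        if i = 0 ∧ j = 2 then 1
        else if i = 2 ∧ j = 0 then -1
        else if i = 1 ∧ j = 3 then 1
        else if i = 3 ∧ j = 1 then -1
        else 0) :
    (∀ b₁ b₂ b₃ : V,
      mul b₁ (mul b₂ b₃) = mul (mul b₁ b₂) b₃ + mul b₂ (mul b₁ b₃)) ∧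
    (∀ b₁ b₂ : V, ω b₁ b₂ = -ω b₂ b₁) ∧
    (∀ b₁ b₂ b₃ : V, ω (mul b₁ b₂) b₃ = ω b₁ (mul b₂ b₃ + mul b₃ b₂)) ∧
    (∀ b : V, (∀ c : V, ω b c = 0) → b = 0) :=
  dim4_quadratic_leibniz_general K V v mul hmul ω hω
end
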